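/- Let n ≥ 2 be an integer, p an integer, T̄ > 0 a real number, and let x₁, x₂ : ℝ → ℂ satisfy, for all real t: x₁(−t) = e^{−iπ/n}·x₂(t), x₂(−t) = e^{iπ/n}·x₁(t), x₁(t + 2T̄) = e^{2πip/n}·x₁(t), and x₂(t + 2T̄) = e^{−2πip/n}·x₂(t). Define u(t) = π(x₁(t), x₂(t)). Then u(−t + T̄) = M(2p−1)·u(t + T̄) for all real t; in particular M(2p−1)·u(T̄) = u(T̄). -/

import Mathlib

open Real Matrix

/-- The map `π : ℂ × ℂ → ℝ³`,
`π(x₁,x₂) = (|x₁|² − |x₂|², 2 Re(x₁ x̄₂), 2 Im(x₁ x̄₂))`. -/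
noncomputable def piMap (x : ℂ × ℂ) : Fin 3 → ℝ :=
  ![‖x.1‖ ^ 2 - ‖x.2‖ ^ 2,
    2 * (x.1 * (starRingEnd ℂ) x.2).re,
    2 * (x.1 * (starRingEnd ℂ) x.2).im]

/-- The 3×3 real matrix `M(k)` with rows `(−1,0,0)`, `(0, cos(2πk/n), sin(2πk/n))`,
`(0, sin(2πk/n), −cos(2πk/n))`. -/
noncomputable def Mmat (n : ℕ) (k : ℤ) : Matrix (Fin 3) (Fin 3) ℝ :=
  !![-1, 0, 0;
     0, Real.cos (2 * π * k / n), Real.sin (2 * π * k / n);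
     0, Real.sin (2 * π * k / n), -Real.cos (2 * π * k / n)]

/-!
Reflecting time about `T̄` combines the reflection symmetry `t ↦ -t` with the quasi-periodicity
over `2T̄`, giving `x₁(T̄ - t) = e^{iθ} x₂(T̄ + t)` and `x₂(T̄ - t) = e^{-iθ} x₁(T̄ + t)` with
`θ = π(2p - 1)/n`. Swapping the two coordinates reverses the sign of `|x₁|² - |x₂|²` and conjugates
`w = x₁ x̄₂`, while the phases multiply it by `e^{2iθ}`; on `ℝ³` this is the reflection `M(2p - 1)`.
-/

noncomputable def reflectionSwap (φ : ℝ) : Matrix (Fin 3) (Fin 3) ℝ :=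
  !![-1, 0, 0;
     0, Real.cos φ, Real.sin φ;
     0, Real.sin φ, -Real.cos φ]

theorem Mmat_eq_reflectionSwap (n : ℕ) (k : ℤ) :
    Mmat n k = reflectionSwap (2 * π * k / n) := rfl

theorem reflectionSwap_mulVec (φ : ℝ) (v : Fin 3 → ℝ) :
    (reflectionSwap φ).mulVec v
      = ![-v 0, Real.cos φ * v 1 + Real.sin φ * v 2, Real.sin φ * v 1 - Real.cos φ * v 2] := by
  ext i
  fin_cases i <;> simp [reflectionSwap, Matrix.mulVec, dotProduct, Fin.sum_univ_three]
  ring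

theorem piMap_swap_mul_exp (θ : ℝ) (a b : ℂ) :
    piMap (Complex.exp (θ * Complex.I) * b, Complex.exp (-(θ * Complex.I)) * a)
      = (reflectionSwap (2 * θ)).mulVec (piMap (a, b)) := by
  have hphase : Complex.exp (θ * Complex.I) * b * starRingEnd ℂ (Complex.exp (-(θ * Complex.I)) * a)
      = Complex.exp ((2 * θ : ℝ) * Complex.I) * starRingEnd ℂ (a * starRingEnd ℂ b) := by
    rw [map_mul, map_mul, Complex.conj_conj, ← Complex.exp_conj, map_neg, map_mul,
      Complex.conj_ofReal, Complex.conj_I]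
    push_cast
    rw [show 2 * (θ : ℂ) * Complex.I = θ * Complex.I + θ * Complex.I by ring, Complex.exp_add]
    ring_nf
  have hnorm (φ : ℝ) : ‖Complex.exp (φ * Complex.I)‖ = 1 := Complex.norm_exp_ofReal_mul_I φ
  have hnorm_neg : ‖Complex.exp (-(θ * Complex.I))‖ = 1 := by
    rw [← neg_mul, ← Complex.ofReal_neg, hnorm]
  rw [reflectionSwap_mulVec]
  simp only [piMap, hphase, norm_mul, hnorm, hnorm_neg, one_mul]
  generalize 2 * θ = φ
  ext i
  fin_cases i <;>
    simp [Complex.mul_re, Complex.mul_im, Complex.exp_ofReal_mul_I_re,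
      Complex.exp_ofReal_mul_I_im] <;>
    ring

theorem apply_neg_add_eq_exp_mul_apply_add {f g : ℝ → ℂ} {T : ℝ} {z w : ℂ}
    (hfg : ∀ t, f (-t) = Complex.exp z * g t) (hg : ∀ t, g (t + 2 * T) = Complex.exp w * g t)
    (t : ℝ) : f (-t + T) = Complex.exp (z - w) * g (t + T) := by
  have hshift := hg (t - T)
  rw [show t - T + 2 * T = t + T by ring] at hshift
  rw [show -t + T = -(t - T) by ring, hfg, hshift, ← mul_assoc, ← Complex.exp_add]
  congr 2
  ring

theorem shape_curve_second_symmetry_general (n : ℕ) (p : ℤ) (Tbar : ℝ)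
    (x₁ x₂ : ℝ → ℂ)
    (h₁ : ∀ t : ℝ, x₁ (-t) = Complex.exp (-(π : ℂ) * Complex.I / (n : ℂ)) * x₂ t)
    (h₂ : ∀ t : ℝ, x₂ (-t) = Complex.exp ((π : ℂ) * Complex.I / (n : ℂ)) * x₁ t)
    (h₃ : ∀ t : ℝ, x₁ (t + 2 * Tbar)
      = Complex.exp (2 * (π : ℂ) * Complex.I * (p : ℂ) / (n : ℂ)) * x₁ t)
    (h₄ : ∀ t : ℝ, x₂ (t + 2 * Tbar)
      = Complex.exp (-(2 * (π : ℂ) * Complex.I * (p : ℂ) / (n : ℂ))) * x₂ t)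
    (u : ℝ → Fin 3 → ℝ) (hu : ∀ t : ℝ, u t = piMap (x₁ t, x₂ t)) :
    (∀ t : ℝ, u (-t + Tbar) = (Mmat n (2 * p - 1)).mulVec (u (t + Tbar))) ∧
    (Mmat n (2 * p - 1)).mulVec (u Tbar) = u Tbar := by
  set θ : ℝ := π * (2 * p - 1) / n with hθ
  have hx₁ (t : ℝ) : x₁ (-t + Tbar) = Complex.exp (θ * Complex.I) * x₂ (t + Tbar) := by
    rw [apply_neg_add_eq_exp_mul_apply_add h₁ h₄]
    congr 2
    rw [hθ]
    push_cast
    ring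
  have hx₂ (t : ℝ) : x₂ (-t + Tbar) = Complex.exp (-(θ * Complex.I)) * x₁ (t + Tbar) := by
    rw [apply_neg_add_eq_exp_mul_apply_add h₂ h₃]
    congr 2
    rw [hθ]
    push_cast
    ring
  have hM : Mmat n (2 * p - 1) = reflectionSwap (2 * θ) := by
    rw [Mmat_eq_reflectionSwap]
    congr 1
    rw [hθ]
    push_cast
    ring
  have hsymm (t : ℝ) : u (-t + Tbar) = (Mmat n (2 * p - 1)).mulVec (u (t + Tbar)) := by
    rw [hu, hu, hx₁, hx₂, hM, piMap_swap_mul_exp]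
  refine ⟨hsymm, ?_⟩
  simpa using (hsymm 0).symm

/-- Under the symmetries `x₁(−t) = e^{−iπ/n}x₂(t)`, `x₂(−t) = e^{iπ/n}x₁(t)`,
`x₁(t+2T̄) = e^{2πip/n}x₁(t)`, `x₂(t+2T̄) = e^{−2πip/n}x₂(t)`, the shape curve
`u(t) = π(x₁(t), x₂(t))` satisfies `u(−t+T̄) = M(2p−1)·u(t+T̄)`; in particular
`M(2p−1)·u(T̄) = u(T̄)`. -/
theorem shape_curve_second_symmetry (n : ℕ) (hn : 2 ≤ n) (p : ℤ) (Tbar : ℝ)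
    (hT : 0 < Tbar) (x₁ x₂ : ℝ → ℂ)
    (h₁ : ∀ t : ℝ, x₁ (-t) = Complex.exp (-(π : ℂ) * Complex.I / (n : ℂ)) * x₂ t)
    (h₂ : ∀ t : ℝ, x₂ (-t) = Complex.exp ((π : ℂ) * Complex.I / (n : ℂ)) * x₁ t)
    (h₃ : ∀ t : ℝ, x₁ (t + 2 * Tbar)
      = Complex.exp (2 * (π : ℂ) * Complex.I * (p : ℂ) / (n : ℂ)) * x₁ t)
    (h₄ : ∀ t : ℝ, x₂ (t + 2 * Tbar)
      = Complex.exp (-(2 * (π : ℂ) * Complex.I * (p : ℂ) / (n : ℂ))) * x₂ t)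
    (u : ℝ → Fin 3 → ℝ) (hu : ∀ t : ℝ, u t = piMap (x₁ t, x₂ t)) :
    (∀ t : ℝ, u (-t + Tbar) = (Mmat n (2 * p - 1)).mulVec (u (t + Tbar))) ∧
    (Mmat n (2 * p - 1)).mulVec (u Tbar) = u Tbar :=
  shape_curve_second_symmetry_general n p Tbar x₁ x₂ h₁ h₂ h₃ h₄ u hu
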